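/- arXiv:2409.15887 — 2 statements merged into one kernel-verified Lean document; each statement's English description precedes it below -/
import Mathlib

section
/- Let X ∈ ℝ^{N×d} be a data matrix with rows x^1,…,x^N, and let G ∈ ℝ^{N×c} be a cluster indicator matrix (entries in {0,1}, each row summing to 1) such that every column sum p_jj = Σ_i g_ij is positive. Let P = diag(p_11,…,p_cc) and S = G P^{-1} Gᵀ with entries s_ij. Then the infimum over all centroid matrices U ∈ ℝ^{c×d} (rows u^1,…,u^c) of the K-means objective Σ_{i,j} g_ij ‖x^i − u^j‖₂² equals (1/2) Σ_{i=1}^{N} Σ_{j=1}^{N} s_ij ‖x^i − x^j‖₂². In particular, K-means can be expressed as manifold learning with similarity matrix S, without explicit centroids. -/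
/-! For a fixed cluster `j` and coordinate `k`, the objective is a weighted sum of squares in
`U j k`. With total weight `p_j`, it equals its value at the weighted mean plus
`p_j (U j k - mean)²`, and that minimum value is `(2 p_j)⁻¹ ∑_{i,i'} g_ij g_i'j (x_ik - x_i'k)²`.
Since `s_ii' = ∑_j g_ij g_i'j / p_j`, summing these minima over `j` and `k` gives the
manifold-learning objective. -/

open Finset Matrix

section WeightedVariance

variable {ι K : Type*} [Fintype ι]

theorem sum_sum_mul_mul_sub_sq [CommRing K] (w x : ι → K) :
    ∑ i, ∑ j, w i * w j * (x i - x j) ^ 2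
      = 2 * ((∑ i, w i) * ∑ i, w i * x i ^ 2 - (∑ i, w i * x i) ^ 2) := by
  have h : ∀ i j, w i * w j * (x i - x j) ^ 2
      = w i * x i ^ 2 * w j + w i * (w j * x j ^ 2) - 2 * (w i * x i) * (w j * x j) :=
    fun i j => by ring
  simp only [h, sum_sub_distrib, sum_add_distrib, ← mul_sum, ← sum_mul]
  ring

theorem sum_mul_sub_sq_eq_add_sq [Field K] [CharZero K] (w x : ι → K) (hw : ∑ i, w i ≠ 0)
    (u : K) :
    ∑ i, w i * (x i - u) ^ 2
      = (2 * ∑ i, w i)⁻¹ * ∑ i, ∑ j, w i * w j * (x i - x j) ^ 2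
        + (∑ i, w i) * (u - (∑ i, w i * x i) / ∑ i, w i) ^ 2 := by
  have h : ∀ i, w i * (x i - u) ^ 2 = w i * x i ^ 2 - 2 * u * (w i * x i) + u ^ 2 * w i :=
    fun i => by ring
  rw [sum_sum_mul_mul_sub_sq]
  simp only [h, sum_add_distrib, sum_sub_distrib, ← mul_sum]
  field_simp
  ring

end WeightedVariance

namespace Matrix

theorem mul_diagonal_mul_transpose_apply {ι κ R : Type*} [Fintype κ] [DecidableEq κ]
    [CommSemiring R] (G : Matrix ι κ R) (v : κ → R) (i i' : ι) :
    (G * diagonal v * Gᵀ) i i' = ∑ j, v j * G i j * G i' j := by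
  rw [mul_apply]
  simp only [mul_diagonal, transpose_apply]
  exact sum_congr rfl fun j _ => by ring

theorem inv_diagonal_of_ne_zero {κ K : Type*} [Fintype κ] [DecidableEq κ] [Field K]
    {v : κ → K} (hv : ∀ j, v j ≠ 0) : (diagonal v)⁻¹ = diagonal v⁻¹ :=
  inv_eq_right_inv <| by
    rw [diagonal_mul_diagonal, ← diagonal_one]
    exact congrArg diagonal (funext fun j => mul_inv_cancel₀ (hv j))

end Matrix

namespace KMeans

variable {ι κ δ : Type*} [Fintype ι] [Fintype κ] [Fintype δ]
  (X : Matrix ι δ ℝ) (G : Matrix ι κ ℝ)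

noncomputable def centroids : Matrix κ δ ℝ := fun j k => (∑ i, G i j * X i k) / ∑ i, G i j

def pairwiseScatter (j : κ) (k : δ) : ℝ :=
  ∑ i, ∑ i', G i j * G i' j * (X i k - X i' k) ^ 2

theorem objective_eq (hG : ∀ j, ∑ i, G i j ≠ 0) (U : Matrix κ δ ℝ) :
    ∑ i, ∑ j, G i j * ∑ k, (X i k - U j k) ^ 2
      = ∑ j, ∑ k, ((2 * ∑ i, G i j)⁻¹ * pairwiseScatter X G j k
          + (∑ i, G i j) * (U j k - centroids X G j k) ^ 2) := by
  calc _ = ∑ j, ∑ k, ∑ i, G i j * (X i k - U j k) ^ 2 := by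
        simp only [mul_sum]
        exact sum_comm_cycle.symm
    _ = _ := sum_congr rfl fun j _ => sum_congr rfl fun k _ =>
        sum_mul_sub_sq_eq_add_sq _ _ (hG j) _

theorem iInf_objective (hG : ∀ j, 0 < ∑ i, G i j) :
    ⨅ U : Matrix κ δ ℝ, ∑ i, ∑ j, G i j * ∑ k, (X i k - U j k) ^ 2
      = ∑ j, ∑ k, (2 * ∑ i, G i j)⁻¹ * pairwiseScatter X G j k := by
  simp only [objective_eq X G fun j => (hG j).ne']
  refine IsGLB.ciInf_eq (IsLeast.isGLB ⟨⟨centroids X G, by simp⟩, ?_⟩)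
  rintro _ ⟨U, rfl⟩
  exact sum_le_sum fun j _ => sum_le_sum fun k _ =>
    le_add_of_nonneg_right (mul_nonneg (hG j).le (sq_nonneg _))

theorem manifold_objective_eq [DecidableEq κ] (v : κ → ℝ) :
    (1 / 2) * ∑ i, ∑ i', (G * diagonal v * Gᵀ) i i' * ∑ k, (X i k - X i' k) ^ 2
      = ∑ j, ∑ k, 2⁻¹ * v j * pairwiseScatter X G j k := by
  simp only [mul_diagonal_mul_transpose_apply, pairwiseScatter, sum_mul, mul_sum]
  simp only [sum_comm (s := (univ : Finset ι)) (t := (univ : Finset κ)),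
    sum_comm (s := (univ : Finset ι)) (t := (univ : Finset δ)),
    sum_comm (s := (univ : Finset δ)) (t := (univ : Finset κ))]
  exact sum_congr rfl fun j _ => sum_congr rfl fun k _ => sum_congr rfl fun i _ =>
    sum_congr rfl fun i' _ => by ring

end KMeans

theorem kmeans_eq_manifold_learning_general {N c d : ℕ}
    (X : Matrix (Fin N) (Fin d) ℝ) (G : Matrix (Fin N) (Fin c) ℝ)
    (hcol : ∀ j, 0 < ∑ i, G i j)
    (P : Matrix (Fin c) (Fin c) ℝ)
    (hP : P = Matrix.diagonal (fun j => ∑ i, G i j))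
    (S : Matrix (Fin N) (Fin N) ℝ)
    (hS : S = G * P⁻¹ * Gᵀ) :
    (⨅ U : Matrix (Fin c) (Fin d) ℝ,
        ∑ i, ∑ j, G i j * ∑ k, (X i k - U j k) ^ 2)
      = (1 / 2) * ∑ i, ∑ j, S i j * ∑ k, (X i k - X j k) ^ 2 := by
  rw [hS, hP, inv_diagonal_of_ne_zero fun j => (hcol j).ne', KMeans.manifold_objective_eq,
    KMeans.iInf_objective X G hcol]
  simp only [Pi.inv_apply, mul_inv]

/-- K-means without centroids: the infimum over centroid matrices `U` of the
K-means objective equals half the manifold-learning objective with similarity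
matrix `S = G P⁻¹ Gᵀ`. -/
theorem kmeans_eq_manifold_learning {N c d : ℕ}
    (X : Matrix (Fin N) (Fin d) ℝ) (G : Matrix (Fin N) (Fin c) ℝ)
    (hG01 : ∀ i j, G i j = 0 ∨ G i j = 1)
    (hrow : ∀ i, ∑ j, G i j = 1)
    (hcol : ∀ j, 0 < ∑ i, G i j)
    (P : Matrix (Fin c) (Fin c) ℝ)
    (hP : P = Matrix.diagonal (fun j => ∑ i, G i j))
    (S : Matrix (Fin N) (Fin N) ℝ)
    (hS : S = G * P⁻¹ * Gᵀ) :
    (⨅ U : Matrix (Fin c) (Fin d) ℝ,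
        ∑ i, ∑ j, G i j * ∑ k, (X i k - U j k) ^ 2)
      = (1 / 2) * ∑ i, ∑ j, S i j * ∑ k, (X i k - X j k) ^ 2 :=
  kmeans_eq_manifold_learning_general X G hcol P hP S hS
end

section
/- Let G ∈ ℝ^{N×c} satisfy g_ij ≥ 0 for all i, j and Σ_{j=1}^c g_ij = 1 for every row i. Then Σ_{j=1}^c ‖g_j‖₂ = √(cN) holds if and only if every entry of G lies in {0,1} (i.e., G is a discrete cluster indicator matrix) and all column sums of G are equal (each equal to N/c). Hence maximizing the ℓ_{2,1}-norm ‖Gᵀ‖_{2,1} over this constraint set forces G to be a discrete label matrix with a balanced class distribution. -/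
/-! Write `sⱼ = ∑ᵢ gᵢⱼ` and `qⱼ = ∑ᵢ gᵢⱼ²`. Since `0 ≤ gᵢⱼ ≤ 1` we have `qⱼ ≤ sⱼ`, with equality iff
column `j` is `{0,1}`-valued, and since `∑ⱼ sⱼ = N`, Jensen's inequality for the strictly concave
`√·` gives `∑ⱼ √sⱼ ≤ √(cN)`, with equality iff all `sⱼ` equal `N / c`. Hence
`∑ⱼ √qⱼ ≤ ∑ⱼ √sⱼ ≤ √(cN)`, and equality at both ends means equality in both steps. -/

open Finset

lemma eq_iff_eq_and_eq_of_le_of_le {α : Type*} [PartialOrder α] {a b c : α}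
    (hab : a ≤ b) (hbc : b ≤ c) : a = c ↔ a = b ∧ b = c := by
  refine ⟨fun hac => ⟨hab.antisymm ?_, hbc.antisymm ?_⟩, fun h => h.1.trans h.2⟩
  · exact hac ▸ hbc
  · exact hac ▸ hab

lemma Finset.sum_sq_eq_sum_iff {ι R : Type*} [CommRing R] [LinearOrder R] [IsStrictOrderedRing R]
    {s : Finset ι} {f : ι → R} (h0 : ∀ i ∈ s, 0 ≤ f i) (h1 : ∀ i ∈ s, f i ≤ 1) :
    ∑ i ∈ s, f i ^ 2 = ∑ i ∈ s, f i ↔ ∀ i ∈ s, f i = 0 ∨ f i = 1 := by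
  rw [sum_eq_sum_iff_of_le fun i hi => pow_le_of_le_one (h0 i hi) (h1 i hi) two_ne_zero]
  refine forall₂_congr fun i _ => ⟨eq_zero_or_one_of_sq_eq_self, ?_⟩
  rintro (h | h) <;> simp [h]

lemma Finset.sum_inv_card_eq_one {ι K : Type*} [DivisionSemiring K] [CharZero K] {s : Finset ι}
    (hs : s.Nonempty) : ∑ _i ∈ s, (#s : K)⁻¹ = 1 := by
  rw [sum_const, nsmul_eq_mul, mul_inv_cancel₀ (by simpa using hs.ne_empty)]

namespace Real

variable {ι : Type*} (s : Finset ι) {f : ι → ℝ}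

lemma mul_sqrt_inv_mul {a : ℝ} (ha : 0 ≤ a) (x : ℝ) : a * √(a⁻¹ * x) = √(a * x) := by
  rcases ha.eq_or_lt with rfl | ha
  · simp
  rw [← sqrt_sq ha.le, ← sqrt_mul (sq_nonneg _), sqrt_sq ha.le]
  congr 1
  field_simp

lemma sum_sqrt_le_sqrt_card_mul_sum (hf : ∀ i ∈ s, 0 ≤ f i) :
    ∑ i ∈ s, √(f i) ≤ √(#s * ∑ i ∈ s, f i) := by
  rcases s.eq_empty_or_nonempty with rfl | hs
  · simp
  have hcard : (0 : ℝ) < #s := by simpa using hs.card_pos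
  have hjensen := strictConcaveOn_sqrt.concaveOn.le_map_sum (t := s) (p := f)
    (fun _ _ => inv_nonneg.2 hcard.le) (sum_inv_card_eq_one hs) hf
  simp only [smul_eq_mul, ← mul_sum] at hjensen
  rw [← mul_sqrt_inv_mul hcard.le]
  calc ∑ i ∈ s, √(f i) = #s * ((#s : ℝ)⁻¹ * ∑ i ∈ s, √(f i)) := by field_simp
    _ ≤ _ := mul_le_mul_of_nonneg_left hjensen hcard.le

lemma sum_sqrt_eq_sqrt_card_mul_sum_iff (hf : ∀ i ∈ s, 0 ≤ f i) :
    ∑ i ∈ s, √(f i) = √(#s * ∑ i ∈ s, f i) ↔ ∀ i ∈ s, f i = (∑ j ∈ s, f j) / #s := by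
  rcases s.eq_empty_or_nonempty with rfl | hs
  · simp
  have hcard : (0 : ℝ) < #s := by simpa using hs.card_pos
  have hjensen := strictConcaveOn_sqrt.map_sum_eq_iff (t := s) (p := f)
    (fun _ _ => inv_pos.2 hcard) (sum_inv_card_eq_one hs) hf
  simp only [smul_eq_mul, ← mul_sum] at hjensen
  rw [eq_comm, ← mul_right_inj' hcard.ne', mul_sqrt_inv_mul hcard.le] at hjensen
  simpa [div_eq_inv_mul, hcard.ne'] using hjensen

end Real

/-- Equality case of the `ℓ_{2,1}`-norm bound: for `G ∈ ℝ^{N×c}` with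
nonnegative entries whose rows each sum to 1, `∑ⱼ ‖gⱼ‖₂ = √(cN)` holds iff
every entry of `G` lies in `{0,1}` (so `G` is a discrete indicator matrix)
and all column sums of `G` are equal to `N/c` (balanced class distribution). -/
theorem l21_norm_max_iff_balanced_indicator {N c : ℕ}
    (G : Matrix (Fin N) (Fin c) ℝ)
    (hGnn : ∀ i j, 0 ≤ G i j)
    (hrow : ∀ i, ∑ j, G i j = 1) :
    (∑ j, Real.sqrt (∑ i, (G i j) ^ 2) = Real.sqrt ((c : ℝ) * N))
      ↔ ((∀ i j, G i j = 0 ∨ G i j = 1) ∧ ∀ j, ∑ i, G i j = (N : ℝ) / c) := by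
  have hle_one (i j) : G i j ≤ 1 := hrow i ▸ single_le_sum (fun k _ => hGnn i k) (mem_univ j)
  have hcol_nonneg : ∀ j ∈ univ, 0 ≤ ∑ i, G i j := fun j _ => sum_nonneg fun i _ => hGnn i j
  have htotal : ∑ j, ∑ i, G i j = N := by rw [sum_comm]; simp [hrow]
  have hsq_le (j) : √(∑ i, G i j ^ 2) ≤ √(∑ i, G i j) :=
    Real.sqrt_le_sqrt <| sum_le_sum fun i _ => pow_le_of_le_one (hGnn i j) (hle_one i j) two_ne_zero
  have hjensen := Real.sum_sqrt_le_sqrt_card_mul_sum univ hcol_nonneg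
  have hbalanced := Real.sum_sqrt_eq_sqrt_card_mul_sum_iff univ hcol_nonneg
  rw [card_univ, Fintype.card_fin, htotal] at hjensen hbalanced
  rw [eq_iff_eq_and_eq_of_le_of_le (sum_le_sum fun j _ => hsq_le j) hjensen, hbalanced]
  refine and_congr ?_ (by simp)
  rw [sum_eq_sum_iff_of_le fun j _ => hsq_le j, forall_comm]
  refine forall_congr' fun j => ?_
  have hcol := sum_sq_eq_sum_iff (s := univ) (fun i _ => hGnn i j) (fun i _ => hle_one i j)
  rw [Real.sqrt_inj (sum_nonneg fun i _ => sq_nonneg _) (hcol_nonneg j (mem_univ j)), hcol]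
  simp
end
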